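/- arXiv:1911.02974 — 5 statements merged into one kernel-verified Lean document; each statement's English description precedes it below -/
import Mathlib

section
/- Let G be a finite nonempty type with cardinality n, let 𝒵 be a finite index type, let (p_z)_{z ∈ 𝒵} be nonnegative real weights with ∑_z p_z = 1, and for each z ∈ 𝒵 let q_z be a probability mass function on G. Let π denote the uniform distribution on G, assigning mass 1/n to each element. Then 2 · (∑_{z ∈ 𝒵} p_z · d_TV(q_z, π))² ≤ n · ∑_{z ∈ 𝒵} p_z · ∑_{x ∈ G} q_z(x)² − 1. -/
/-!
By Cauchy–Schwarz, `(∑ₓ |q(x) - 1/n|)² ≤ n ∑ₓ (q(x) - 1/n)² = n ∑ₓ q(x)² - 1` for every probability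
vector `q` on a set of size `n`, so `2 d_TV(q, π)² ≤ 4 d_TV(q, π)² ≤ n ∑ₓ q(x)² - 1`. Averaging over
`z` with the weights `p` and applying Jensen's inequality `(∑ p_z a_z)² ≤ ∑ p_z a_z²` gives the claim.
-/

open Finset

section UniformDistance

variable {ι : Type*} [Fintype ι] {f : ι → ℝ}

theorem cast_card_ne_zero_of_sum_eq_one (hf : ∑ x, f x = 1) : (Fintype.card ι : ℝ) ≠ 0 := by
  have : Nonempty ι := univ_nonempty_iff.1 (nonempty_of_sum_ne_zero (hf ▸ one_ne_zero))
  exact_mod_cast Fintype.card_ne_zero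

theorem sum_sq_sub_inv_card (hf : ∑ x, f x = 1) :
    ∑ x, (f x - 1 / Fintype.card ι) ^ 2 = ∑ x, f x ^ 2 - 1 / Fintype.card ι := by
  have hcard := cast_card_ne_zero_of_sum_eq_one hf
  simp only [sub_sq, sum_add_distrib, sum_sub_distrib, ← sum_mul, ← mul_sum, hf, sum_const,
    card_univ, nsmul_eq_mul]
  field_simp
  ring

theorem sq_sum_abs_sub_inv_card_le (hf : ∑ x, f x = 1) :
    (∑ x, |f x - 1 / Fintype.card ι|) ^ 2 ≤ Fintype.card ι * ∑ x, f x ^ 2 - 1 := by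
  have hcard := cast_card_ne_zero_of_sum_eq_one hf
  calc (∑ x, |f x - 1 / Fintype.card ι|) ^ 2
      ≤ Fintype.card ι * ∑ x, |f x - 1 / Fintype.card ι| ^ 2 := by
        simpa only [card_univ] using sq_sum_le_card_mul_sum_sq (s := univ)
    _ = Fintype.card ι * ∑ x, f x ^ 2 - 1 := by
        simp only [sq_abs, sum_sq_sub_inv_card hf]
        field_simp

end UniformDistance

theorem sq_sum_mul_le_sum_mul_sq {𝕜 Z : Type*} [Field 𝕜] [LinearOrder 𝕜] [IsStrictOrderedRing 𝕜]
    [Fintype Z] {p a : Z → 𝕜} (hp : ∀ z, 0 ≤ p z) (hpsum : ∑ z, p z = 1) :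
    (∑ z, p z * a z) ^ 2 ≤ ∑ z, p z * a z ^ 2 :=
  (even_two.convexOn_pow (𝕜 := 𝕜)).map_sum_le (fun z _ => hp z) hpsum fun _ _ => Set.mem_univ _

theorem stmt_5_general {G : Type*} [Fintype G] {Z : Type*} [Fintype Z]
    (n : ℕ) (hn : Fintype.card G = n)
    (p : Z → ℝ) (hp : ∀ z, 0 ≤ p z) (hpsum : ∑ z, p z = 1)
    (q : Z → G → ℝ) (hqsum : ∀ z, ∑ x, q z x = 1) :
    2 * (∑ z, p z * ((1 / 2) * ∑ x, |q z x - 1 / n|)) ^ 2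
      ≤ n * (∑ z, p z * ∑ x, (q z x) ^ 2) - 1 := by
  subst hn
  set tv : Z → ℝ := fun z => (1 / 2) * ∑ x, |q z x - 1 / Fintype.card G|
  have tv_bound (z : Z) : 2 * tv z ^ 2 ≤ Fintype.card G * ∑ x, q z x ^ 2 - 1 := by
    have := sq_sum_abs_sub_inv_card_le (hqsum z)
    simp only [tv]
    nlinarith [sq_nonneg (∑ x, |q z x - 1 / Fintype.card G|)]
  calc 2 * (∑ z, p z * tv z) ^ 2
      ≤ ∑ z, p z * (2 * tv z ^ 2) := by
        simp_rw [mul_left_comm (p _) 2, ← mul_sum]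
        gcongr
        exact sq_sum_mul_le_sum_mul_sq hp hpsum
    _ ≤ ∑ z, p z * (Fintype.card G * ∑ x, q z x ^ 2 - 1) :=
        sum_le_sum fun z _ => mul_le_mul_of_nonneg_left (tv_bound z) (hp z)
    _ = Fintype.card G * (∑ z, p z * ∑ x, q z x ^ 2) - 1 := by
        simp only [mul_sub, mul_one, sum_sub_distrib, hpsum, mul_left_comm (p _), ← mul_sum]

/-- modified L² bound on averaged total-variation distance to uniform:
`2 (∑_z p_z d_TV(q_z, π))² ≤ n ∑_z p_z ∑_x q_z(x)² − 1`. -/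
theorem stmt_5 {G : Type*} [Fintype G] [Nonempty G] {Z : Type*} [Fintype Z]
    (n : ℕ) (hn : Fintype.card G = n)
    (p : Z → ℝ) (hp : ∀ z, 0 ≤ p z) (hpsum : ∑ z, p z = 1)
    (q : Z → G → ℝ) (hq : ∀ z x, 0 ≤ q z x) (hqsum : ∀ z, ∑ x, q z x = 1) :
    2 * (∑ z, p z * ((1 / 2) * ∑ x, |q z x - 1 / n|)) ^ 2
      ≤ n * (∑ z, p z * ∑ x, (q z x) ^ 2) - 1 :=
  stmt_5_general n hn p hp hpsum q hqsum
end

section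
/- Let E be a countable type, let μ be a probability mass function on E, let A be a finite nonempty type with cardinality N, let φ : E → A be any map, and let ω > 0. Let 𝓔 = {w ∈ E : μ(w) ≥ e^ω / N}. Then d_TV(φ_*μ, π_A) ≥ μ(𝓔) − e^{−ω}, where φ_*μ is the pushforward probability mass function on A, given by (φ_*μ)(x) = ∑_{w : φ(w) = x} μ(w), and π_A is the uniform distribution on A. -/
/-! Push the superlevel set `𝓔` forward: every `w ∈ 𝓔` has `φ_*μ(φ w) ≥ μ w ≥ e^ω/N`, so `𝓔`
lies in the preimage of the superlevel set `S` of `φ_*μ` at the same threshold, and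
`μ(𝓔) ≤ φ_*μ(S)`. Since `φ_*μ` has total mass one, `S` has at most `N e^{-ω}` points, so
`π_A(S) ≤ e^{-ω}`, and `φ_*μ(S) - π_A(S) ≤ d_TV(φ_*μ, π_A)`. -/

open scoped ENNReal

open Finset

theorem Finset.two_mul_sum_le_sum_abs_of_sum_eq_zero {ι : Type*} [Fintype ι] {h : ι → ℝ}
    (h0 : ∑ i, h i = 0) (s : Finset ι) : 2 * ∑ i ∈ s, h i ≤ ∑ i, |h i| := by
  classical
  rw [← sum_add_sum_compl s] at h0 ⊢
  have hs : ∑ i ∈ s, h i ≤ ∑ i ∈ s, |h i| := sum_le_sum fun i _ => le_abs_self (h i)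
  have hsc : ∑ i ∈ sᶜ, -h i ≤ ∑ i ∈ sᶜ, |h i| := sum_le_sum fun i _ => neg_le_abs (h i)
  rw [sum_neg_distrib] at hsc
  linarith

namespace PMF

variable {α β : Type*}

theorem sum_coe [Fintype α] (p : PMF α) : ∑ a, p a = 1 := by
  rw [← p.tsum_coe, tsum_fintype]

theorem sum_toReal [Fintype α] (p : PMF α) : ∑ a, (p a).toReal = 1 := by
  rw [← ENNReal.toReal_sum fun a _ => p.apply_ne_top a, p.sum_coe, ENNReal.toReal_one]

theorem apply_le_map_apply (p : PMF α) (f : α → β) (a : α) : p a ≤ p.map f (f a) := by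
  rw [← toOuterMeasure_apply_singleton, ← toOuterMeasure_apply_singleton,
    toOuterMeasure_map_apply]
  exact p.toOuterMeasure.mono fun x hx => hx ▸ rfl

theorem toOuterMeasure_superlevel_le_map (p : PMF α) (f : α → β) (t : ℝ≥0∞) :
    p.toOuterMeasure {a | t ≤ p a} ≤ (p.map f).toOuterMeasure {b | t ≤ p.map f b} := by
  rw [toOuterMeasure_map_apply]
  exact p.toOuterMeasure.mono fun a ha => le_trans ha (p.apply_le_map_apply f a)

theorem card_superlevel_mul_le_one [Fintype α] [DecidableEq α] (p : PMF α) (t : ℝ≥0∞) :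
    #{a | t ≤ p a} * t ≤ 1 := by
  calc #{a | t ≤ p a} * t = ∑ a with t ≤ p a, t := by rw [sum_const, nsmul_eq_mul]
    _ ≤ ∑ a with t ≤ p a, p a := sum_le_sum fun a ha => (mem_filter.1 ha).2
    _ ≤ ∑ a, p a := sum_le_sum_of_subset (subset_univ _)
    _ = 1 := p.sum_coe

theorem sum_toReal_sub_card_div_le_half_sum_abs [Fintype α] (p : PMF α) (s : Finset α) :
    ∑ a ∈ s, (p a).toReal - #s / Fintype.card α
      ≤ (1 / 2) * ∑ a, |(p a).toReal - 1 / Fintype.card α| := by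
  have : Nonempty α := let ⟨a, _⟩ := p.support_nonempty; ⟨a⟩
  have hcard : (Fintype.card α : ℝ) ≠ 0 := Nat.cast_ne_zero.2 (Fintype.card_ne_zero (α := α))
  have h0 : ∑ a, ((p a).toReal - 1 / Fintype.card α) = 0 := by
    rw [sum_sub_distrib, p.sum_toReal, sum_const, card_univ, nsmul_eq_mul, mul_one_div_cancel hcard,
      sub_self]
  have hs := two_mul_sum_le_sum_abs_of_sum_eq_zero h0 s
  rw [sum_sub_distrib, sum_const, nsmul_eq_mul] at hs
  linarith [show (#s : ℝ) * (1 / Fintype.card α) = #s / Fintype.card α by ring]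

end PMF

theorem stmt_7_general {E : Type*} (μ : PMF E)
    {A : Type*} [Fintype A] (N : ℕ) (hN : Fintype.card A = N)
    (φ : E → A) (ω : ℝ) :
    (1 / 2) * ∑ x, |((μ.map φ) x).toReal - 1 / N|
      ≥ (∑' w : {w : E // ENNReal.ofReal (Real.exp ω / N) ≤ μ w}, μ w.1).toReal
        - Real.exp (-ω) := by
  classical
  subst hN
  set t := ENNReal.ofReal (Real.exp ω / Fintype.card A)
  set S : Finset A := {x | t ≤ μ.map φ x}
  have hlevel : (∑' w : {w : E // t ≤ μ w}, μ w.1).toReal ≤ ∑ x ∈ S, (μ.map φ x).toReal := by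
    rw [← ENNReal.toReal_sum fun x _ => (μ.map φ).apply_ne_top x]
    refine ENNReal.toReal_mono (ENNReal.sum_ne_top.2 fun x _ => (μ.map φ).apply_ne_top x) ?_
    rw [← PMF.toOuterMeasure_apply_finset]
    have hE : ∑' w : {w : E // t ≤ μ w}, μ w.1 = μ.toOuterMeasure {w | t ≤ μ w} := by
      rw [PMF.toOuterMeasure_apply, ← _root_.tsum_subtype]; rfl
    rw [hE, coe_filter_univ]
    exact μ.toOuterMeasure_superlevel_le_map φ t
  have hcard : (#S : ℝ) / Fintype.card A ≤ Real.exp (-ω) := by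
    have hmass := ENNReal.toReal_mono ENNReal.one_ne_top ((μ.map φ).card_superlevel_mul_le_one t)
    rw [ENNReal.toReal_mul, ENNReal.toReal_natCast, ENNReal.toReal_ofReal (by positivity),
      ENNReal.toReal_one] at hmass
    calc (#S : ℝ) / Fintype.card A = #S * (Real.exp ω / Fintype.card A) * Real.exp (-ω) := by
          rw [Real.exp_neg]; field_simp
      _ ≤ Real.exp (-ω) := mul_le_of_le_one_left (Real.exp_nonneg _) hmass
  have hTV := (μ.map φ).sum_toReal_sub_card_div_le_half_sum_abs S
  linarith

/-- for a pushforward `φ_*μ` of a probability mass function `μ` on a countable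
set to a finite set `A` of cardinality `N`, with `𝓔 = {w : μ(w) ≥ e^ω/N}`, one has
`d_TV(φ_*μ, π_A) ≥ μ(𝓔) − e^{−ω}`. -/
theorem stmt_7 {E : Type*} [Countable E] (μ : PMF E)
    {A : Type*} [Fintype A] [Nonempty A] (N : ℕ) (hN : Fintype.card A = N)
    (φ : E → A) (ω : ℝ) (hω : 0 < ω) :
    (1 / 2) * ∑ x, |((μ.map φ) x).toReal - 1 / N|
      ≥ (∑' w : {w : E // ENNReal.ofReal (Real.exp ω / N) ≤ μ w}, μ w.1).toReal
        - Real.exp (-ω) :=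
  stmt_7_general μ N hN φ ω
end

section
/- Let G be a finite group, let k ≥ 1, let z : Fin k → G, and let R ∈ ℕ. Let 𝓑 be the set of elements g ∈ G such that g = z(i_1) · z(i_2) ⋯ z(i_m) for some m ≤ R and some (i_1,…,i_m) ∈ (Fin k)^m (that is, g is a product of at most R of the elements z(1),…,z(k), with repetitions allowed and with no inverses). Then the cardinality of 𝓑 is at most |[G,G]| · C(R + k, k), where [G,G] is the commutator subgroup of G. -/
private theorem aux_prod {k : ℕ} {M : Type*} [CommMonoid M] (f : Fin k → M)
    (s : Multiset (Fin k)) :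
    (s.map f).prod = ∏ i : Fin k, f i ^ s.count i := by
  classical
  rw [Finset.prod_multiset_map_count]
  exact Finset.prod_subset (Finset.subset_univ _) (fun i _ hi => by
    rw [Multiset.count_eq_zero_of_notMem (by simpa using hi), pow_zero])

/-- the ball of radius `R` in the (directed) Cayley graph of a finite group `G`
with generators `z(1), …, z(k)` has cardinality at most `|[G,G]| · C(R + k, k)`. -/
theorem stmt_9 {G : Type*} [Group G] [Fintype G]
    (k : ℕ) (hk : 1 ≤ k) (z : Fin k → G) (R : ℕ) :
    Nat.card {g : G | ∃ m ≤ R, ∃ w : Fin m → Fin k,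
        g = ((List.finRange m).map (fun j => z (w j))).prod}
      ≤ Nat.card (commutator G) * (R + k).choose k := by
  classical
  set S : Set G := {g : G | ∃ m ≤ R, ∃ w : Fin m → Fin k,
        g = ((List.finRange m).map (fun j => z (w j))).prod} with hS
  let F : commutator G × Sym (Fin (k+1)) R → G := fun p =>
    (p.1 : G) * ((List.finRange k).map
      (fun i => z i ^ Multiset.count (Fin.castSucc i) (p.2 : Multiset (Fin (k+1))))).prod
  have hsurj : ∀ g ∈ S, ∃ a, F a = g := by
    rintro g ⟨m, hm, w, rfl⟩
    set M : Multiset (Fin k) := Multiset.map w ↑(List.finRange m) with hM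
    set x : Fin k → ℕ := fun i => M.count i with hx
    set P : G := ((List.finRange k).map (fun i => z i ^ x i)).prod with hP
    set s : Multiset (Fin (k+1)) :=
      M.map Fin.castSucc + Multiset.replicate (R - m) (Fin.last k) with hs
    have hcard : Multiset.card s = R := by
      simp [hs, hM, Nat.add_sub_cancel' hm]
    have hcount : ∀ i : Fin k, Multiset.count (Fin.castSucc i) s = x i := by
      intro i
      rw [hs, Multiset.count_add, Multiset.count_replicate,
        if_neg ((Fin.castSucc_lt_last i).ne).symm,
        Multiset.count_map_eq_count' _ _ (Fin.castSucc_injective k), add_zero]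
    set g : G := ((List.finRange m).map (fun j => z (w j))).prod with hg
    have hab : Abelianization.of (g * P⁻¹) = 1 := by
      have h1 : Abelianization.of g = ∏ i : Fin k, Abelianization.of (z i) ^ x i := by
        calc Abelianization.of g
            = (Multiset.map (fun a => Abelianization.of (z a)) M).prod := by
              rw [hg, map_list_prod, hM]
              simp [List.map_map, Function.comp_def]
          _ = ∏ i : Fin k, Abelianization.of (z i) ^ x i := aux_prod _ M
      have h2 : Abelianization.of P = ∏ i : Fin k, Abelianization.of (z i) ^ x i := by
        rw [hP, map_list_prod, Fin.prod_univ_def]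
        simp [List.map_map, Function.comp_def, map_pow]
      rw [map_mul, map_inv, h1, h2, mul_inv_cancel]
    have hc : g * P⁻¹ ∈ commutator G := (QuotientGroup.eq_one_iff _).mp hab
    refine ⟨⟨⟨g * P⁻¹, hc⟩, ⟨s, hcard⟩⟩, ?_⟩
    show (g * P⁻¹) * ((List.finRange k).map
      (fun i => z i ^ Multiset.count (Fin.castSucc i) s)).prod = g
    have hfun : (fun i => z i ^ Multiset.count (Fin.castSucc i) s)
        = (fun i => z i ^ x i) := funext fun i => by rw [hcount]
    rw [hfun, ← hP]
    group
  have key : Nat.card S ≤ Nat.card (commutator G × Sym (Fin (k+1)) R) := by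
    have hinj : Function.Injective
        (fun p : S => (hsurj p.1 p.2).choose) := by
      intro p q h
      dsimp only at h
      apply Subtype.ext
      rw [← (hsurj p.1 p.2).choose_spec, ← (hsurj q.1 q.2).choose_spec, h]
    exact Nat.card_le_card_of_injective _ hinj
  calc Nat.card S ≤ Nat.card (commutator G × Sym (Fin (k+1)) R) := key
    _ = Nat.card (commutator G) * Nat.card (Sym (Fin (k+1)) R) := Nat.card_prod _ _
    _ = Nat.card (commutator G) * (R + k).choose k := by
        congr 1
        rw [Nat.card_eq_fintype_card, Sym.card_sym_eq_choose, Fintype.card_fin]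
        have h1 : k + 1 + R - 1 = R + k := by omega
        have h2 : (R + k).choose R = (R + k).choose k := by
          rw [← Nat.choose_symm (Nat.le_add_left k R), Nat.add_sub_cancel]
        rw [h1, h2]
end

section
/- Let G be a group of nilpotency class at most 2, i.e., the commutator subgroup [G,G] is contained in the center of G. Let k ≥ 1, let z : Fin k → G, let N ∈ ℕ, and let γ : Fin N → Fin k. For i, j ∈ Fin k set w_i = |{ℓ : γ(ℓ) = i}| and C_{i,j} = |{(m, ℓ) : m < ℓ, γ(ℓ) = i, γ(m) = j}|. Then z(γ(1)) · z(γ(2)) ⋯ z(γ(N)) = (∏_{i=1}^k z(i)^{w_i}) · ∏_{i < j} ⁅z(i)⁻¹, z(j)⁻¹⁆^{−C_{i,j}}, where the first product is taken in increasing order of i, ⁅x, y⁆ = x y x⁻¹ y⁻¹ denotes the commutator, and the second product is independent of the order of its factors since all commutators are central. -/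
/-!
Since commutators are central, `y ↦ ⁅y, x⁆` is a homomorphism into the centre, so in a
collected word `∏ᵢ z i ^ e i` the letter `z a` moves left past the block `∏_{j > a} z j ^ e j`
at the cost of the central factor `∏_{j > a} ⁅z j, z a⁆ ^ e j`. Appending the letters of the
word one at a time, the letter `a = γ ℓ` thus pays `⁅z j, z a⁆ = ⁅(z a)⁻¹, (z j)⁻¹⁆⁻¹` once for
every earlier occurrence of a larger letter `j`, which is what the inversion count `C_{a,j}`
records.
-/

open scoped commutatorElement IsMulCommutative
open Finset

theorem Fin.prod_Ioi_eq_list_prod {M : Type*} [CommMonoid M] {k : ℕ} (i : Fin k)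
    (f : Fin k → M) :
    ∏ j ∈ Ioi i, f j = (((List.finRange k).filter (i < ·)).map f).prod := by
  rw [← List.prod_toFinset _ ((List.nodup_finRange k).filter _), List.toFinset_filter,
    List.toFinset_finRange]
  simp [Finset.filter_lt_eq_Ioi]

section Counting

variable {k N : ℕ}

def letterCount (γ : Fin N → Fin k) (i : Fin k) : ℕ :=
  (Finset.univ.filter (fun ℓ : Fin N => γ ℓ = i)).card

def inversionCount (γ : Fin N → Fin k) (i j : Fin k) : ℕ :=
  (Finset.univ.filter (fun q : Fin N × Fin N => q.1 < q.2 ∧ γ q.2 = i ∧ γ q.1 = j)).card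

theorem letterCount_zero (γ : Fin 0 → Fin k) : letterCount γ = 0 := by
  ext i; simp [letterCount]

theorem inversionCount_zero (γ : Fin 0 → Fin k) : inversionCount γ = 0 := by
  ext i j; simp [inversionCount]

theorem letterCount_succ (γ : Fin (N + 1) → Fin k) :
    letterCount γ = letterCount (γ ∘ Fin.castSucc) + Pi.single (γ (Fin.last N)) 1 := by
  ext i
  simp only [letterCount, card_filter, Fin.sum_univ_castSucc, Pi.add_apply, Pi.single_apply,
    Function.comp_apply, eq_comm]

theorem inversionCount_succ (γ : Fin (N + 1) → Fin k) :
    inversionCount γ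
      = inversionCount (γ ∘ Fin.castSucc)
        + Pi.single (γ (Fin.last N)) (letterCount (γ ∘ Fin.castSucc)) := by
  ext i j
  simp only [inversionCount, card_filter, Fintype.sum_prod_type,
    Fin.sum_univ_castSucc, Pi.add_apply, Pi.single_apply, Function.comp_apply]
  have hlast : ∀ x : Fin N, ¬ Fin.last N < x.castSucc := fun x => not_lt.2 (Fin.le_last _)
  by_cases h : γ (Fin.last N) = i
  · simp only [Fin.castSucc_lt_castSucc_iff, sum_boole, Nat.cast_id, Fin.castSucc_lt_last, h,
      true_and, sum_add_distrib, hlast, false_and, ↓reduceIte, sum_const_zero, lt_self_iff_false,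
      add_zero, Nat.add_left_cancel_iff]
    rfl
  · simp [h, Ne.symm h, hlast]

end Counting

section ClassTwo

variable {G : Type*} [Group G]

theorem commutatorElement_mul_left_of_mem_center {x y w : G}
    (h : ⁅y, w⁆ ∈ Subgroup.center G) : ⁅x * y, w⁆ = ⁅x, w⁆ * ⁅y, w⁆ := by
  rw [commutatorElement_mul_left_eq_conj_mul, Subgroup.mem_center_iff.1 h x,
    mul_inv_cancel_right, Subgroup.mem_center_iff.1 h]

theorem mul_eq_mul_mul_commutatorElement {x y : G} (h : ⁅y, x⁆ ∈ Subgroup.center G) :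
    y * x = x * y * ⁅y, x⁆ := by
  rw [Subgroup.mem_center_iff.1 h, commutatorElement_def]
  group

theorem list_prod_map_pow_mul_of_pairwise (hG : ∀ x y : G, ⁅x, y⁆ ∈ Subgroup.center G)
    {ι : Type*} [LinearOrder ι] (z : ι → G) (e : ι → ℕ)
    {a : ι} {l : List ι} (hl : l.Pairwise (· < ·)) (ha : a ∈ l) :
    (l.map fun i => z i ^ e i).prod * z a
      = (l.map fun i => z i ^ (e + Pi.single a 1 : ι → ℕ) i).prod
        * ⁅((l.filter (a < ·)).map fun j => z j ^ e j).prod, z a⁆ := by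
  induction l with
  | nil => simp at ha
  | cons b t ih =>
    obtain ⟨hbt, ht⟩ := List.pairwise_cons.1 hl
    rcases List.mem_cons.1 ha with rfl | hat
    · have hfilter : (a :: t).filter (a < ·) = t := by simpa using hbt
      have hmap :
          (t.map fun i => z i ^ (e + Pi.single a 1 : ι → ℕ) i) = t.map fun i => z i ^ e i :=
        List.map_congr_left fun j hj => by simp [(hbt j hj).ne']
      rw [List.map_cons, List.map_cons, List.prod_cons, List.prod_cons, hfilter, hmap, Pi.add_apply,
        Pi.single_eq_same, pow_succ, mul_assoc, mul_eq_mul_mul_commutatorElement (hG _ (z a))]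
      simp only [mul_assoc]
    · have hba := hbt a hat
      simp only [List.map_cons, List.prod_cons, mul_assoc, ih ht hat, List.filter_cons,
        decide_eq_true_eq, not_lt_of_gt hba, if_false, Pi.add_apply,
        Pi.single_eq_of_ne hba.ne, add_zero]

variable (hG : ∀ x y : G, ⁅x, y⁆ ∈ Subgroup.center G)

def commutatorLeftHom (x : G) : G →* Subgroup.center G where
  toFun y := ⟨⁅y, x⁆, hG y x⟩
  map_one' := Subtype.ext (commutatorElement_one_left x)
  map_mul' _ _ := Subtype.ext (commutatorElement_mul_left_of_mem_center (hG _ x))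

@[simp]
theorem coe_commutatorLeftHom (x y : G) : (commutatorLeftHom hG x y : G) = ⁅y, x⁆ := rfl

theorem commutatorLeftHom_swap (x y : G) :
    commutatorLeftHom hG y x = (commutatorLeftHom hG x y)⁻¹ :=
  Subtype.ext (commutatorElement_inv y x).symm

theorem commutatorLeftHom_inv_inv (x y : G) :
    commutatorLeftHom hG y⁻¹ x⁻¹ = (commutatorLeftHom hG x y)⁻¹ := by
  rw [map_inv, commutatorLeftHom_swap, map_inv, inv_inv]

variable {k : ℕ}

def orderedPowProd (z : Fin k → G) (e : Fin k → ℕ) : G :=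
  ((List.finRange k).map fun i => z i ^ e i).prod

theorem orderedPowProd_mul (z : Fin k → G) (e : Fin k → ℕ) (a : Fin k) :
    orderedPowProd z e * z a
      = orderedPowProd z (e + Pi.single a 1)
        * ↑(∏ j ∈ Ioi a, commutatorLeftHom hG (z a) (z j) ^ e j) := by
  rw [orderedPowProd, list_prod_map_pow_mul_of_pairwise hG z e (List.pairwise_lt_finRange k)
    (List.mem_finRange a), ← orderedPowProd, ← coe_commutatorLeftHom hG, map_list_prod,
    List.map_map, Fin.prod_Ioi_eq_list_prod]
  simp only [Function.comp_def, map_pow]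

def commutatorCorrection (z : Fin k → G) (C : Fin k → Fin k → ℕ) : Subgroup.center G :=
  ∏ i, ∏ j ∈ Ioi i, commutatorLeftHom hG (z j)⁻¹ (z i)⁻¹ ^ (-(C i j : ℤ))

theorem coe_commutatorCorrection (z : Fin k → G) (C : Fin k → Fin k → ℕ) :
    (commutatorCorrection hG z C : G)
      = ((List.finRange k).map fun i =>
          (((List.finRange k).filter (i < ·)).map fun j =>
            ⁅(z i)⁻¹, (z j)⁻¹⁆ ^ (-(C i j : ℤ))).prod).prod := by
  simp only [commutatorCorrection, Fin.prod_univ_def, Fin.prod_Ioi_eq_list_prod,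
    Subgroup.val_list_prod, List.map_map, Function.comp_def, Subgroup.coe_zpow,
    coe_commutatorLeftHom]

theorem commutatorCorrection_add_single (z : Fin k → G) (C : Fin k → Fin k → ℕ) (a : Fin k)
    (w : Fin k → ℕ) :
    commutatorCorrection hG z (C + Pi.single a w)
      = commutatorCorrection hG z C * ∏ j ∈ Ioi a, commutatorLeftHom hG (z a) (z j) ^ w j := by
  simp only [commutatorCorrection, Pi.add_apply, Nat.cast_add, neg_add, zpow_add,
    prod_mul_distrib]
  congr 1
  rw [Finset.prod_eq_single a (fun i _ hia => by simp [Pi.single_eq_of_ne hia]) (by simp)]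
  simp [commutatorLeftHom_inv_inv]

theorem list_prod_map_eq_orderedPowProd_mul_commutatorCorrection (z : Fin k → G) :
    ∀ {N : ℕ} (γ : Fin N → Fin k), ((List.finRange N).map fun ℓ => z (γ ℓ)).prod
      = orderedPowProd z (letterCount γ) * commutatorCorrection hG z (inversionCount γ)
  | 0, γ => by
    simp [letterCount_zero, inversionCount_zero, orderedPowProd, commutatorCorrection]
  | N + 1, γ => by
    set a := γ (Fin.last N)
    set Q := commutatorCorrection hG z (inversionCount (γ ∘ Fin.castSucc))
    calc ((List.finRange (N + 1)).map fun ℓ => z (γ ℓ)).prod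
        = orderedPowProd z (letterCount (γ ∘ Fin.castSucc)) * Q * z a := by
          rw [List.finRange_succ_last, List.map_append, List.prod_append, List.map_map,
            ← list_prod_map_eq_orderedPowProd_mul_commutatorCorrection z (γ ∘ Fin.castSucc)]
          simp [a, Function.comp_def]
      _ = orderedPowProd z (letterCount (γ ∘ Fin.castSucc)) * z a * Q := by
          rw [mul_assoc, mul_assoc, Subgroup.mem_center_iff.1 Q.2]
      _ = orderedPowProd z (letterCount γ) * commutatorCorrection hG z (inversionCount γ) := by
          rw [orderedPowProd_mul hG, letterCount_succ, inversionCount_succ,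
            commutatorCorrection_add_single, mul_assoc, Subgroup.coe_mul,
            Subgroup.mem_center_iff.1 Q.2]

end ClassTwo

theorem stmt_13_general {G : Type*} [Group G]
    (hG : ∀ x y : G, ⁅x, y⁆ ∈ Subgroup.center G)
    (k : ℕ) (z : Fin k → G) (N : ℕ) (γ : Fin N → Fin k) :
    ((List.finRange N).map (fun ℓ => z (γ ℓ))).prod
      = ((List.finRange k).map (fun i =>
            z i ^ (Finset.univ.filter (fun ℓ : Fin N => γ ℓ = i)).card)).prod
        * ((List.finRange k).map (fun i =>
            (((List.finRange k).filter (fun j => i < j)).map (fun j =>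
              ⁅(z i)⁻¹, (z j)⁻¹⁆ ^
                (-((Finset.univ.filter (fun q : Fin N × Fin N =>
                      q.1 < q.2 ∧ γ q.2 = i ∧ γ q.1 = j)).card : ℤ)))).prod)).prod := by
  rw [list_prod_map_eq_orderedPowProd_mul_commutatorCorrection hG z γ, coe_commutatorCorrection]
  rfl

/-- in a group of nilpotency class at most 2 (all commutators central), an
ordered word `z(γ(1)) ⋯ z(γ(N))` equals `(∏_i z(i)^{w_i}) · ∏_{i<j} ⁅z(i)⁻¹, z(j)⁻¹⁆^{−C_{i,j}}`,
where `w_i` counts occurrences of `i` in `γ` and `C_{i,j}` counts pairs `m < ℓ` with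
`γ(ℓ) = i`, `γ(m) = j`. -/
theorem stmt_13 {G : Type*} [Group G]
    (hG : ∀ x y : G, ⁅x, y⁆ ∈ Subgroup.center G)
    (k : ℕ) (hk : 1 ≤ k) (z : Fin k → G) (N : ℕ) (γ : Fin N → Fin k) :
    ((List.finRange N).map (fun ℓ => z (γ ℓ))).prod
      = ((List.finRange k).map (fun i =>
            z i ^ (Finset.univ.filter (fun ℓ : Fin N => γ ℓ = i)).card)).prod
        * ((List.finRange k).map (fun i =>
            (((List.finRange k).filter (fun j => i < j)).map (fun j =>
              ⁅(z i)⁻¹, (z j)⁻¹⁆ ^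
                (-((Finset.univ.filter (fun q : Fin N × Fin N =>
                      q.1 < q.2 ∧ γ q.2 = i ∧ γ q.1 = j)).card : ℤ)))).prod)).prod :=
  stmt_13_general hG k z N γ
end

section
/- Let r ≥ 1, let B ⊆ Fin r with |B| = w ≥ 1, let σ be a uniformly random permutation of Fin r, and let ℓ ∈ ℕ. Then the probability that there exists j with j + ℓ ≤ r such that σ(b) ∉ {j, j+1, …, j+ℓ−1} for every b ∈ B (i.e., some interval of ℓ consecutive positions contains no element of the image σ(B)) is at most r · exp(−ℓ·w/r). -/
/-! For a fixed window `[j, j + ℓ)`, group the permutations mapping `B` into its complement `S`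
(of size `r - ℓ`) by the image `σ(B) ⊆ S`. Each group lies in a coset of the stabiliser of `B`,
which has order `w! (r - w)!`, so the window is missed with probability at most
`C(r - ℓ, w) / C(r, w) ≤ (1 - ℓ/r)^w ≤ exp(-ℓw/r)`. A union bound over the at most `r` windows
finishes the proof. -/

open scoped Classical

open Finset Equiv Nat

theorem Nat.descFactorial_mul_pow_le_descFactorial_mul_pow {m n : ℕ} (h : m ≤ n) :
    ∀ k : ℕ, m.descFactorial k * n ^ k ≤ n.descFactorial k * m ^ k
  | 0 => by simp
  | k + 1 => by
    have step : (m - k) * n ≤ (n - k) * m := by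
      rw [Nat.sub_mul, Nat.sub_mul, mul_comm n m]
      exact Nat.sub_le_sub_left (Nat.mul_le_mul_left k h) _
    calc m.descFactorial (k + 1) * n ^ (k + 1)
        = ((m - k) * n) * (m.descFactorial k * n ^ k) := by rw [descFactorial_succ]; ring
      _ ≤ ((n - k) * m) * (n.descFactorial k * m ^ k) :=
        Nat.mul_le_mul step (descFactorial_mul_pow_le_descFactorial_mul_pow h k)
      _ = n.descFactorial (k + 1) * m ^ (k + 1) := by rw [descFactorial_succ]; ring

namespace Equiv.Perm
variable {α : Type*} [Fintype α] [DecidableEq α]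

theorem card_setStabilizer (B : Finset α) :
    #{g : Perm α | (· ∈ B) ∘ g = (· ∈ B)} = (#B)! * (Fintype.card α - #B)! := by
  rw [← Fintype.card_subtype, DomMulAct.stabilizer_card]
  simp [Fintype.card_subtype_compl]

theorem card_filter_image_eq_le (B T : Finset α) :
    #{σ : Perm α | B.image σ = T} ≤ (#B)! * (Fintype.card α - #B)! := by
  rw [← card_setStabilizer B]
  obtain ⟨σ₀, hσ₀⟩ | hempty := ({σ : Perm α | B.image σ = T} : Finset _).eq_empty_or_nonempty.symm
  · replace hσ₀ : B.image σ₀ = T := (mem_filter.1 hσ₀).2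
    have mem_iff {σ : Perm α} (hσ : B.image σ = T) (x : α) : σ x ∈ T ↔ x ∈ B := by
      rw [← hσ]; exact σ.injective.mem_finset_image
    refine card_le_card_of_injOn (σ₀⁻¹ * ·) (fun σ hσ => ?_) (fun σ _ τ _ h => mul_left_cancel h)
    simp only [coe_filter, Set.mem_ofPred_eq, mem_univ, true_and] at hσ ⊢
    ext x
    simpa [mem_iff hσ] using (mem_iff hσ₀ (σ₀⁻¹ (σ x))).symm
  · simp [hempty]

theorem card_filter_forall_mem_le (B S : Finset α) :
    #{σ : Perm α | ∀ b ∈ B, σ b ∈ S} ≤ (Fintype.card α - #B)! * (#S).descFactorial #B := by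
  have maps_to : ∀ σ ∈ ({σ : Perm α | ∀ b ∈ B, σ b ∈ S} : Finset _),
      B.image σ ∈ S.powersetCard #B := by
    intro σ hσ
    simp only [mem_filter, mem_univ, true_and] at hσ
    simpa [mem_powersetCard, card_image_of_injective _ σ.injective, image_subset_iff] using hσ
  calc _ ≤ (#B)! * (Fintype.card α - #B)! * #(S.powersetCard #B) :=
        card_le_mul_card_image_of_maps_to maps_to _ fun T _ =>
          (card_le_card (filter_subset_filter _ (subset_univ _))).trans
            (card_filter_image_eq_le B T)
    _ = _ := by rw [card_powersetCard, descFactorial_eq_factorial_mul_choose]; ring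

theorem card_filter_forall_mem_div_le (B S : Finset α) :
    (#{σ : Perm α | ∀ b ∈ B, σ b ∈ S} : ℝ) / (Fintype.card α)! ≤
      ((#S : ℝ) / Fintype.card α) ^ #B := by
  set n := Fintype.card α
  have hB : #B ≤ n := card_le_univ B
  obtain hn | hn := n.eq_zero_or_pos
  · rw [show #B = 0 by omega, pow_zero, div_le_one (by positivity)]
    exact_mod_cast (card_filter_le _ _).trans (by simp [n, Fintype.card_perm])
  have hS : #S ≤ n := card_le_univ S
  have hdesc : (0 : ℝ) < n.descFactorial #B := by
    exact_mod_cast Nat.pos_of_ne_zero (descFactorial_eq_zero_iff_lt.not.2 (not_lt.2 hB))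
  calc (#{σ : Perm α | ∀ b ∈ B, σ b ∈ S} : ℝ) / n !
      ≤ ((n - #B)! * (#S).descFactorial #B : ℕ) / ((n - #B)! * n.descFactorial #B : ℕ) := by
        rw [factorial_mul_descFactorial hB]
        gcongr
        exact_mod_cast card_filter_forall_mem_le B S
    _ = ((#S).descFactorial #B : ℝ) / n.descFactorial #B := by
        push_cast
        exact mul_div_mul_left _ _ (by positivity)
    _ ≤ ((#S : ℝ) / n) ^ #B := by
        rw [div_pow, div_le_div_iff₀ hdesc (by positivity), mul_comm ((#S : ℝ) ^ #B)]
        exact_mod_cast Nat.descFactorial_mul_pow_le_descFactorial_mul_pow hS #B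

end Equiv.Perm

def outsideWindow (r j ℓ : ℕ) : Finset (Fin r) := {x | (x : ℕ) < j ∨ j + ℓ ≤ x}

@[simp]
theorem mem_outsideWindow {r j ℓ : ℕ} {x : Fin r} :
    x ∈ outsideWindow r j ℓ ↔ (x : ℕ) < j ∨ j + ℓ ≤ x := by
  simp [outsideWindow]

theorem card_outsideWindow_add {r j ℓ : ℕ} (h : j + ℓ ≤ r) : #(outsideWindow r j ℓ) + ℓ = r := by
  have window : (outsideWindow r j ℓ)ᶜ =
      (Ico j (j + ℓ)).attachFin (fun m hm => by rw [mem_Ico] at hm; omega) := by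
    ext x
    simp only [mem_compl, mem_outsideWindow, mem_attachFin, mem_Ico]
    omega
  have := card_add_card_compl (outsideWindow r j ℓ)
  rwa [window, card_attachFin, Nat.card_Ico, add_tsub_cancel_left, Fintype.card_fin] at this

open Real in
theorem card_filter_forall_mem_outsideWindow_div_le {r j ℓ : ℕ} (hr : 0 < r) (h : j + ℓ ≤ r)
    (B : Finset (Fin r)) :
    (#{σ : Perm (Fin r) | ∀ b ∈ B, σ b ∈ outsideWindow r j ℓ} : ℝ) / r ! ≤
      exp (-(ℓ * #B) / r) := by
  have hS : (#(outsideWindow r j ℓ) : ℝ) / r = 1 - ℓ / r := by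
    rw [eq_sub_iff_add_eq, ← add_div, div_eq_one_iff_eq (by positivity)]
    exact_mod_cast card_outsideWindow_add h
  calc _ ≤ ((#(outsideWindow r j ℓ) : ℝ) / r) ^ #B := by
        convert Perm.card_filter_forall_mem_div_le B (outsideWindow r j ℓ) using 2 <;>
          simp
    _ = (1 - ℓ / r) ^ #B := by rw [hS]
    _ ≤ exp (-(ℓ / r)) ^ #B := by
        gcongr
        · rw [← hS]; positivity
        · exact one_sub_le_exp_neg _
    _ = exp (-(ℓ * #B) / r) := by rw [← exp_nat_mul]; congr 1; ring

theorem stmt_16_general (r : ℕ) (hr : 1 ≤ r) (B : Finset (Fin r)) (w : ℕ)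
    (hB : B.card = w) (ℓ : ℕ) :
    ((Finset.univ.filter (fun σ : Equiv.Perm (Fin r) =>
        ∃ j : ℕ, j + ℓ ≤ r ∧ ∀ b ∈ B, ((σ b : ℕ) < j ∨ j + ℓ ≤ (σ b : ℕ)))).card : ℝ)
        / (Nat.factorial r)
      ≤ r * Real.exp (-(ℓ * w : ℝ) / r) := by
  subst hB
  obtain rfl | hℓ := ℓ.eq_zero_or_pos
  -- for `ℓ = 0` all `r + 1` windows are empty, too many for the union bound
  · calc _ ≤ (1 : ℝ) := by
          rw [div_le_one (by positivity)]
          exact_mod_cast (card_le_univ _).trans_eq (by simp [Fintype.card_perm])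
      _ ≤ _ := by simpa using hr
  set missing := fun j : ℕ => ({σ : Perm (Fin r) | ∀ b ∈ B, σ b ∈ outsideWindow r j ℓ} : Finset _)
  have union : ({σ : Perm (Fin r) | ∃ j, j + ℓ ≤ r ∧ ∀ b ∈ B, (σ b : ℕ) < j ∨ j + ℓ ≤ σ b} : Finset _)
      ⊆ (range (r + 1 - ℓ)).biUnion missing := by
    intro σ hσ
    obtain ⟨j, hj, hσj⟩ := (mem_filter.1 hσ).2
    exact mem_biUnion.2 ⟨j, mem_range.2 (by omega), mem_filter.2 ⟨mem_univ σ, by simpa using hσj⟩⟩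
  calc _ ≤ ∑ j ∈ range (r + 1 - ℓ), (#(missing j) : ℝ) / r ! := by
        rw [← sum_div]
        gcongr
        exact_mod_cast (card_le_card union).trans card_biUnion_le
    _ ≤ ∑ j ∈ range (r + 1 - ℓ), Real.exp (-(ℓ * #B) / r) :=
        sum_le_sum fun j hj => card_filter_forall_mem_outsideWindow_div_le hr
          (by rw [mem_range] at hj; omega) B
    _ ≤ r * Real.exp (-(ℓ * #B) / r) := by
        rw [sum_const, card_range, nsmul_eq_mul]
        gcongr
        exact_mod_cast (by omega : r + 1 - ℓ ≤ r)

/-- for a uniformly random permutation `σ` of `Fin r` and `B ⊆ Fin r` with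
`|B| = w ≥ 1`, the probability that some interval of `ℓ` consecutive positions contains no
element of `σ(B)` is at most `r · exp(−ℓw/r)`. -/
theorem stmt_16 (r : ℕ) (hr : 1 ≤ r) (B : Finset (Fin r)) (w : ℕ)
    (hB : B.card = w) (hw : 1 ≤ w) (ℓ : ℕ) :
    ((Finset.univ.filter (fun σ : Equiv.Perm (Fin r) =>
        ∃ j : ℕ, j + ℓ ≤ r ∧ ∀ b ∈ B, ((σ b : ℕ) < j ∨ j + ℓ ≤ (σ b : ℕ)))).card : ℝ)
        / (Nat.factorial r)
      ≤ r * Real.exp (-(ℓ * w : ℝ) / r) :=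
  stmt_16_general r hr B w hB ℓ
end
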